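/- arXiv:1910.07814 — 2 statements merged into one kernel-verified Lean document; each statement's English description precedes it below -/
import Mathlib

section
/- Let A = G(d,e,k) be a group of squarefree order n = de, with z = gcd(k−1, e) and g = e/z. Then the automorphism group Aut(A) is isomorphic to ℤ/gℤ ⋊ (ℤ/eℤ)ˣ; in particular |Aut(A)| = g·φ(e), where φ is Euler's totient function. -/
/-- The relators for the group `G(d,e,k) = ⟨σ, τ | σ^e = τ^d = 1, τστ⁻¹ = σ^k⟩`. -/
def braceRels (d e k : ℕ) : Set (FreeGroup (Fin 2)) :=
  {FreeGroup.of 0 ^ e, FreeGroup.of 1 ^ d,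
    FreeGroup.of 1 * FreeGroup.of 0 * (FreeGroup.of 1)⁻¹ * (FreeGroup.of 0 ^ k)⁻¹}

/-- The group `G(d,e,k)` presented by generators σ (index 0) and τ (index 1). -/
abbrev GGrp (d e k : ℕ) := PresentedGroup (braceRels d e k)

/-!
Since `gcd(d, e) = 1`, the solutions of `x ^ e = 1` are the powers of `σ`, so an automorphism sends
`σ ↦ σ ^ s` with `s` a unit mod `e`; writing `τ ↦ σ ^ a * τ ^ j`, the relation `τστ⁻¹ = σ ^ k`
forces `k ^ j ≡ k (mod e)`, i.e. `j ≡ 1 (mod d)`. Conversely `σ ↦ σ ^ s`, `τ ↦ σ ^ a * τ` respects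
`τ ^ d = 1` iff `e ∣ a S` with `S = 1 + k + ⋯ + k ^ (d - 1)`. As `e ∣ (k - 1) S` and
`S ≡ d (mod k - 1)` is prime to `z = gcd(k - 1, e)`, this holds iff `z ∣ a`. Hence automorphisms
correspond to pairs `(a / z mod g, s)`, composing as `(m, s)(m', s') = (m + s m', s s')`.
Lower bounds on orders come from the affine representation `σ ↦ (x ↦ x + 1)`, `τ ↦ (x ↦ k x)`.
-/

open Finset SemidirectProduct

def MonoidHom.toMulAut {G M : Type*} [Group G] [Monoid M] (f : G →* Monoid.End M) :
    G →* MulAut M where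
  toFun x := (f x).toMulEquiv (f x⁻¹)
    (show f x⁻¹ * f x = 1 by rw [← map_mul, inv_mul_cancel, map_one])
    (show f x * f x⁻¹ = 1 by rw [← map_mul, mul_inv_cancel, map_one])
  map_one' := MulEquiv.ext fun m => show f 1 m = m by rw [map_one]; rfl
  map_mul' x y := MulEquiv.ext fun m => show f (x * y) m = f x (f y m) by rw [map_mul]; rfl

@[simp]
lemma MonoidHom.toMulAut_apply {G M : Type*} [Group G] [Monoid M] (f : G →* Monoid.End M)
    (x : G) (m : M) : f.toMulAut x m = f x m := rfl

def unitsMulAut (m : ℕ) : (ZMod m)ˣ →* MulAut (Multiplicative (ZMod m)) :=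
  (MulAutMultiplicative (ZMod m)).symm.toMonoidHom.comp (DistribMulAction.toAddAut _ _)

@[simp]
lemma unitsMulAut_apply {m : ℕ} (u : (ZMod m)ˣ) (a : ZMod m) :
    unitsMulAut m u (.ofAdd a) = .ofAdd (u * a) := rfl

def unitsMulAutOfDvd {g e : ℕ} (h : g ∣ e) : (ZMod e)ˣ →* MulAut (Multiplicative (ZMod g)) :=
  (unitsMulAut g).comp (Units.map (ZMod.castHom h (ZMod g)).toMonoidHom)

@[simp]
lemma toAdd_unitsMulAutOfDvd_apply {g e : ℕ} (h : g ∣ e) (s : (ZMod e)ˣ)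
    (m : Multiplicative (ZMod g)) :
    (unitsMulAutOfDvd h s m).toAdd = (s : ZMod e).cast * m.toAdd := rfl

lemma natCast_mul_eq_of_natCast_eq {z g e x y : ℕ} (hzg : z * g = e) (h : (x : ZMod g) = y) :
    ((z * x : ℕ) : ZMod e) = (z * y : ℕ) := by
  subst hzg
  rw [ZMod.natCast_eq_natCast_iff] at h ⊢
  exact h.mul_left' z

lemma pow_eq_pow_of_natCast_eq {G : Type*} [LeftCancelMonoid G] {x : G} {n a b : ℕ} (hx : x ^ n = 1)
    (h : (a : ZMod n) = b) : x ^ a = x ^ b :=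
  pow_eq_pow_iff_modEq.mpr <|
    ((ZMod.natCast_eq_natCast_iff _ _ _).mp h).of_dvd (orderOf_dvd_of_pow_eq_one hx)

lemma Nat.dvd_mul_iff_gcd_dvd {c s e x : ℕ} (hdvd : e ∣ c * s) (hcop : s.Coprime (c.gcd e)) :
    e ∣ x * s ↔ c.gcd e ∣ x := by
  refine ⟨fun h => hcop.symm.dvd_of_dvd_mul_right ((Nat.gcd_dvd_right c e).trans h), fun h => ?_⟩
  calc e ∣ (c * s).gcd (e * s) := Nat.dvd_gcd hdvd (dvd_mul_right e s)
    _ = c.gcd e * s := Nat.gcd_mul_right c s e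
    _ ∣ x * s := mul_dvd_mul_right h s

lemma dvd_sub_one_mul_geomSum {d e k : ℕ} (hk : (k : ZMod e) ^ d = 1) :
    e ∣ (k - 1) * ∑ i ∈ range d, k ^ i := by
  rcases Nat.eq_zero_or_pos k with rfl | hk0
  · simp
  rw [← ZMod.natCast_eq_zero_iff]
  push_cast [Nat.cast_sub hk0]
  rw [mul_geom_sum, hk, sub_self]

lemma geomSum_modEq_of_pos {k : ℕ} (hk : 0 < k) (d : ℕ) :
    ∑ i ∈ range d, k ^ i ≡ d [MOD k - 1] := by
  have hk1 : (k : ZMod (k - 1)) = 1 := by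
    have h := ZMod.natCast_self (k - 1)
    push_cast [Nat.cast_sub hk] at h
    exact sub_eq_zero.mp h
  rw [← ZMod.natCast_eq_natCast_iff]
  push_cast
  simp [hk1]

lemma coprime_geomSum_gcd_sub_one {d e k : ℕ} (hke : k.Coprime e) (hde : d.Coprime e) :
    (∑ i ∈ range d, k ^ i).Coprime ((k - 1).gcd e) := by
  rcases Nat.eq_zero_or_pos k with rfl | hk0
  · rw [(Nat.coprime_zero_left e).mp hke, Nat.gcd_one_right]
    exact Nat.coprime_one_right _
  unfold Nat.Coprime
  rw [← Nat.gcd_assoc, (geomSum_modEq_of_pos hk0 d).gcd_eq, Nat.gcd_assoc]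
  exact Nat.Coprime.coprime_dvd_right (Nat.gcd_dvd_right _ _) hde

namespace GGrp

variable {d e k : ℕ}

def σ : GGrp d e k := PresentedGroup.of 0

def τ : GGrp d e k := PresentedGroup.of 1

lemma σ_pow_eq_one : (σ : GGrp d e k) ^ e = 1 := by
  have h := PresentedGroup.one_of_mem (rels := braceRels d e k) (.inl rfl)
  rwa [map_pow] at h

lemma τ_pow_eq_one : (τ : GGrp d e k) ^ d = 1 := by
  have h := PresentedGroup.one_of_mem (rels := braceRels d e k) (.inr (.inl rfl))
  rwa [map_pow] at h

lemma τ_mul_σ_mul_τ_inv : (τ : GGrp d e k) * σ * τ⁻¹ = σ ^ k := by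
  have h := PresentedGroup.one_of_mem (rels := braceRels d e k) (.inr (.inr rfl))
  rwa [map_mul, map_inv, map_mul, map_mul, map_pow, mul_inv_eq_one] at h

lemma τ_pow_mul_σ_pow (j a : ℕ) : (τ : GGrp d e k) ^ j * σ ^ a = σ ^ (k ^ j * a) * τ ^ j := by
  have hconj : MulAut.conj ((τ : GGrp d e k) ^ j) σ = σ ^ k ^ j := by
    induction j with
    | zero => simp
    | succ j ih =>
      rw [pow_succ, map_mul, MulAut.mul_apply, MulAut.conj_apply τ, τ_mul_σ_mul_τ_inv, map_pow,
        ih, ← pow_mul, ← pow_succ]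
  rw [← mul_inv_eq_iff_eq_mul, ← MulAut.conj_apply, map_pow, hconj, pow_mul]

lemma σ_pow_mul_τ_pow_conj (b j a : ℕ) :
    (σ ^ b * τ ^ j : GGrp d e k) * σ ^ a * (σ ^ b * τ ^ j)⁻¹ = σ ^ (k ^ j * a) := by
  rw [mul_assoc (σ ^ b), τ_pow_mul_σ_pow]
  group

lemma σ_pow_mul_τ_pow_pow (a j : ℕ) :
    (σ ^ a * τ : GGrp d e k) ^ j = σ ^ (a * ∑ i ∈ range j, k ^ i) * τ ^ j := by
  induction j with
  | zero => simp
  | succ j ih =>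
    rw [pow_succ', ih, mul_assoc, ← mul_assoc τ, ← pow_one τ, τ_pow_mul_σ_pow, pow_one,
      mul_assoc, ← mul_assoc (σ ^ a), ← pow_add, ← pow_succ', geom_sum_succ]
    ring_nf

lemma exists_eq_σ_pow_mul_τ_pow [NeZero d] [NeZero e] (x : GGrp d e k) :
    ∃ a b : ℕ, x = σ ^ a * τ ^ b := by
  have hfin : ∀ y ∈ Set.range (PresentedGroup.of (rels := braceRels d e k)), IsOfFinOrder y := by
    rintro _ ⟨i, rfl⟩
    fin_cases i
    exacts [isOfFinOrder_iff_pow_eq_one.mpr ⟨e, NeZero.pos e, σ_pow_eq_one⟩,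
      isOfFinOrder_iff_pow_eq_one.mpr ⟨d, NeZero.pos d, τ_pow_eq_one⟩]
  have hx : x ∈ Submonoid.closure (Set.range PresentedGroup.of) := by
    rw [← Subgroup.closure_toSubmonoid_of_isOfFinOrder hfin, PresentedGroup.closure_range_of]
    trivial
  induction hx using Submonoid.closure_induction with
  | mem y hy =>
    obtain ⟨i, rfl⟩ := hy
    fin_cases i
    exacts [⟨1, 0, by simp [σ]⟩, ⟨0, 1, by simp [τ]⟩]
  | one => exact ⟨0, 0, by simp⟩
  | mul y y' _ _ hy hy' =>
    obtain ⟨a, b, rfl⟩ := hy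
    obtain ⟨a', b', rfl⟩ := hy'
    refine ⟨a + k ^ b * a', b + b', ?_⟩
    rw [mul_assoc, ← mul_assoc (τ ^ b), τ_pow_mul_σ_pow, pow_add, pow_add]
    group

lemma end_ext {f f' : Monoid.End (GGrp d e k)} (hσ : f σ = f' σ) (hτ : f τ = f' τ) : f = f' :=
  PresentedGroup.ext fun i => by fin_cases i; exacts [hσ, hτ]

lemma mulAut_ext {f f' : MulAut (GGrp d e k)} (hσ : f σ = f' σ) (hτ : f τ = f' τ) : f = f' :=
  MulEquiv.toMonoidHom_injective <| PresentedGroup.ext fun i => by fin_cases i; exacts [hσ, hτ]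

-- By `σ_pow_mul_τ_pow_pow`, the divisibility is the relation `τ ^ d = 1` for the images.
def endo (a b : ℕ) (h : e ∣ a * ∑ i ∈ range d, k ^ i) : Monoid.End (GGrp d e k) :=
  PresentedGroup.toGroup (f := ![σ ^ b, σ ^ a * τ]) <| by
    rintro r (rfl | rfl | rfl)
    · suffices (σ ^ b) ^ e = (1 : GGrp d e k) by simpa
      rw [← pow_mul, mul_comm, pow_mul, σ_pow_eq_one, one_pow]
    · obtain ⟨c, hc⟩ := h
      simp [σ_pow_mul_τ_pow_pow, τ_pow_eq_one, hc, pow_mul, σ_pow_eq_one]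
    · simpa [mul_inv_eq_one, ← pow_mul, mul_comm b k] using σ_pow_mul_τ_pow_conj a 1 b

@[simp]
lemma endo_σ (a b : ℕ) (h : e ∣ a * ∑ i ∈ range d, k ^ i) : endo a b h σ = σ ^ b :=
  PresentedGroup.toGroup.of _

@[simp]
lemma endo_τ (a b : ℕ) (h : e ∣ a * ∑ i ∈ range d, k ^ i) : endo a b h τ = σ ^ a * τ :=
  PresentedGroup.toGroup.of _

section Model

variable (hke : k.Coprime e)

def toAffine (hu : ZMod.unitOfCoprime k hke ^ d = 1) :
    GGrp d e k →* Multiplicative (ZMod e) ⋊[unitsMulAut e] (ZMod e)ˣ :=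
  PresentedGroup.toGroup (f := ![inl (.ofAdd 1), inr (ZMod.unitOfCoprime k hke)]) <| by
    rintro r (rfl | rfl | rfl)
    · simp only [map_pow, FreeGroup.lift_apply_of, Matrix.cons_val_zero]
      simp [← map_pow, ← ofAdd_nsmul]
    · simp only [map_pow, FreeGroup.lift_apply_of, Matrix.cons_val_one]
      simp [← map_pow, hu]
    · simp only [map_mul, map_inv, map_pow, FreeGroup.lift_apply_of, Matrix.cons_val_zero,
        Matrix.cons_val_one]
      simp [← map_pow, ← ofAdd_nsmul, ← map_inv, ← inl_aut, ← map_mul]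

variable {hke}

@[simp]
lemma toAffine_σ (hu : ZMod.unitOfCoprime k hke ^ d = 1) :
    toAffine hke hu σ = inl (.ofAdd 1) :=
  PresentedGroup.toGroup.of _

@[simp]
lemma toAffine_τ (hu : ZMod.unitOfCoprime k hke ^ d = 1) :
    toAffine hke hu τ = inr (ZMod.unitOfCoprime k hke) :=
  PresentedGroup.toGroup.of _

lemma orderOf_σ (hu : ZMod.unitOfCoprime k hke ^ d = 1) : orderOf (σ : GGrp d e k) = e := by
  refine Nat.dvd_antisymm (orderOf_dvd_of_pow_eq_one σ_pow_eq_one) ?_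
  simpa [orderOf_injective _ inl_injective, orderOf_ofAdd_eq_addOrderOf] using
    orderOf_map_dvd (toAffine hke hu) σ

lemma σ_pow_eq_σ_pow_iff (hu : ZMod.unitOfCoprime k hke ^ d = 1) {a b : ℕ} :
    (σ : GGrp d e k) ^ a = σ ^ b ↔ (a : ZMod e) = b := by
  rw [pow_eq_pow_iff_modEq, orderOf_σ hu, ZMod.natCast_eq_natCast_iff]

lemma σ_pow_eq_one_iff (hu : ZMod.unitOfCoprime k hke ^ d = 1) {a : ℕ} :
    (σ : GGrp d e k) ^ a = 1 ↔ e ∣ a := by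
  rw [← orderOf_dvd_iff_pow_eq_one, orderOf_σ hu]

lemma exists_eq_σ_pow_of_pow_eq_one [NeZero d] [NeZero e]
    (hord : orderOf (ZMod.unitOfCoprime k hke) = d) (hde : d.Coprime e) {x : GGrp d e k}
    (hx : x ^ e = 1) : ∃ a : ℕ, x = σ ^ a := by
  obtain ⟨a, b, rfl⟩ := exists_eq_σ_pow_mul_τ_pow x
  have hu : ZMod.unitOfCoprime k hke ^ d = 1 := hord ▸ pow_orderOf_eq_one _
  have hdb : d ∣ b := by
    have h := congrArg (fun y => rightHom (toAffine hke hu y)) hx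
    simp only [map_pow, map_mul, toAffine_σ, toAffine_τ, rightHom_inl, rightHom_inr, one_pow,
      one_mul, map_one] at h
    rw [← pow_mul, ← orderOf_dvd_iff_pow_eq_one, hord] at h
    exact hde.dvd_of_dvd_mul_right h
  obtain ⟨c, rfl⟩ := hdb
  exact ⟨a, by rw [pow_mul, τ_pow_eq_one, one_pow, mul_one]⟩

lemma exists_mulAut_apply_eq [NeZero d] [NeZero e]
    (hord : orderOf (ZMod.unitOfCoprime k hke) = d) (hde : d.Coprime e) (f : MulAut (GGrp d e k)) :
    ∃ a b : ℕ, IsUnit (a : ZMod e) ∧ e ∣ b * ∑ i ∈ range d, k ^ i ∧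
      f σ = σ ^ a ∧ f τ = σ ^ b * τ := by
  have hu : ZMod.unitOfCoprime k hke ^ d = 1 := hord ▸ pow_orderOf_eq_one _
  obtain ⟨a, hfσ⟩ := exists_eq_σ_pow_of_pow_eq_one hord hde (x := f σ)
    (by rw [← map_pow, σ_pow_eq_one, map_one])
  obtain ⟨c, hc⟩ := exists_eq_σ_pow_of_pow_eq_one hord hde (x := f.symm σ)
    (by rw [← map_pow, σ_pow_eq_one, map_one])
  have ha : IsUnit (a : ZMod e) := by
    refine IsUnit.of_mul_eq_one (c : ZMod e) ?_
    have h : (σ : GGrp d e k) ^ (a * c) = σ ^ 1 := by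
      rw [pow_mul, ← hfσ, ← map_pow, ← hc, f.apply_symm_apply, pow_one]
    exact_mod_cast (σ_pow_eq_σ_pow_iff hu).mp h
  obtain ⟨b, j, hfτ⟩ := exists_eq_σ_pow_mul_τ_pow (f τ)
  have hj : (τ : GGrp d e k) ^ j = τ := by
    have hrel := congrArg f τ_mul_σ_mul_τ_inv
    rw [map_mul, map_mul, map_inv, map_pow, hfσ, hfτ, σ_pow_mul_τ_pow_conj, ← pow_mul,
      σ_pow_eq_σ_pow_iff hu] at hrel
    have hkj : (k : ZMod e) ^ j = k := by
      push_cast at hrel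
      exact ha.mul_left_injective (by linear_combination hrel)
    have hj1 : ZMod.unitOfCoprime k hke ^ j = ZMod.unitOfCoprime k hke ^ 1 :=
      Units.ext (by simp [hkj])
    rw [pow_eq_pow_iff_modEq, hord, ← ZMod.natCast_eq_natCast_iff] at hj1
    exact (pow_eq_pow_of_natCast_eq τ_pow_eq_one hj1).trans (pow_one τ)
  rw [hj] at hfτ
  refine ⟨a, b, ha, ?_, hfσ, hfτ⟩
  have h : (σ ^ b * τ : GGrp d e k) ^ d = 1 := by rw [← hfτ, ← map_pow, τ_pow_eq_one, map_one]
  rwa [σ_pow_mul_τ_pow_pow, τ_pow_eq_one, mul_one, σ_pow_eq_one_iff hu] at h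

end Model

section Aut

variable {z g : ℕ} [NeZero e] [NeZero g] (hzg : z * g = e)
  (hS : ∀ a, e ∣ a * ∑ i ∈ range d, k ^ i ↔ z ∣ a)

-- `(m, s)` acts as `θ ^ m ∘ φ_s` in the notation of the paper.
def autHom :
    Multiplicative (ZMod g) ⋊[unitsMulAutOfDvd (Dvd.intro_left z hzg)] (ZMod e)ˣ →*
      MulAut (GGrp d e k) :=
  MonoidHom.toMulAut
    { toFun x := endo (z * x.left.toAdd.val) (x.right : ZMod e).val ((hS _).2 (dvd_mul_right _ _))
      map_one' := by
        refine end_ext ?_ ?_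
        · rw [endo_σ, ← pow_one σ, ← pow_mul, one_mul]
          exact pow_eq_pow_of_natCast_eq σ_pow_eq_one (by simp)
        · simp [Monoid.End.coe_one]
      map_mul' x y := by
        refine end_ext ?_ ?_
        · rw [Monoid.End.coe_mul, Function.comp_apply, endo_σ, endo_σ, map_pow, endo_σ, ← pow_mul]
          exact pow_eq_pow_of_natCast_eq σ_pow_eq_one (by simp)
        · rw [Monoid.End.coe_mul, Function.comp_apply, endo_τ, endo_τ, map_mul, map_pow, endo_σ,
            endo_τ, ← pow_mul, ← mul_assoc, ← pow_add]
          congr 1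
          refine pow_eq_pow_of_natCast_eq σ_pow_eq_one ?_
          rw [show (x.right : ZMod e).val * (z * y.left.toAdd.val) + z * x.left.toAdd.val =
            z * (x.left.toAdd.val + (x.right : ZMod e).val * y.left.toAdd.val) by ring]
          refine natCast_mul_eq_of_natCast_eq hzg ?_
          rw [mul_left, toAdd_mul, toAdd_unitsMulAutOfDvd_apply]
          push_cast [ZMod.natCast_val, ZMod.cast_id', id_eq]
          rfl }

@[simp]
lemma autHom_apply_σ
    (x : Multiplicative (ZMod g) ⋊[unitsMulAutOfDvd (Dvd.intro_left z hzg)] (ZMod e)ˣ) :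
    autHom hzg hS x σ = σ ^ (x.right : ZMod e).val := by
  simp [autHom]

@[simp]
lemma autHom_apply_τ
    (x : Multiplicative (ZMod g) ⋊[unitsMulAutOfDvd (Dvd.intro_left z hzg)] (ZMod e)ˣ) :
    autHom hzg hS x τ = σ ^ (z * x.left.toAdd.val) * τ := by
  simp [autHom]

lemma autHom_injective {hke : k.Coprime e} (hu : ZMod.unitOfCoprime k hke ^ d = 1) :
    Function.Injective (autHom hzg hS) := by
  rw [injective_iff_map_eq_one]
  rintro ⟨m, s⟩ hx
  have hσ := congrArg (· σ) hx
  have hτ := congrArg (· τ) hx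
  simp only [autHom_apply_σ, autHom_apply_τ, MulAut.one_apply, mul_eq_right] at hσ hτ
  have hs : s = 1 := by
    have h := (σ_pow_eq_σ_pow_iff hu).mp (hσ.trans (pow_one σ).symm)
    rw [ZMod.natCast_zmod_val, Nat.cast_one] at h
    exact Units.ext h
  have hm : m = 1 := by
    have hz : 0 < z := Nat.pos_of_mul_pos_right (hzg ▸ NeZero.pos e)
    rw [σ_pow_eq_one_iff hu, ← hzg, Nat.mul_dvd_mul_iff_left hz, ← ZMod.natCast_eq_zero_iff,
      ZMod.natCast_zmod_val] at hτ
    exact hτ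
  rw [hs, hm]
  rfl

lemma autHom_surjective [NeZero d] {hke : k.Coprime e}
    (hord : orderOf (ZMod.unitOfCoprime k hke) = d) (hde : d.Coprime e) :
    Function.Surjective (autHom hzg hS) := by
  intro f
  obtain ⟨a, b, ha, hb, hfσ, hfτ⟩ := exists_mulAut_apply_eq hord hde f
  obtain ⟨c, rfl⟩ := (hS b).1 hb
  refine ⟨⟨.ofAdd (c : ZMod g), ha.unit⟩, mulAut_ext ?_ ?_⟩
  · rw [autHom_apply_σ, hfσ]
    exact pow_eq_pow_of_natCast_eq σ_pow_eq_one (by simp)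
  · rw [autHom_apply_τ, hfτ, toAdd_ofAdd]
    exact congrArg (· * τ) <| pow_eq_pow_of_natCast_eq σ_pow_eq_one <|
      natCast_mul_eq_of_natCast_eq hzg (by simp)

end Aut

end GGrp

/-- For `A = G(d,e,k)` of squarefree order `n = de`, with `z = gcd(k-1,e)` and `g = e/z`,
the automorphism group of `A` is isomorphic to a semidirect product `ℤ/gℤ ⋊ (ℤ/eℤ)ˣ`;
in particular `|Aut(A)| = g·φ(e)`. -/
theorem aut_GGrp (n d e k z g : ℕ) (hn : Squarefree n) (hde : n = d * e)
    (hcop : Nat.Coprime d e) (hke : Nat.Coprime k e)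
    (hord : orderOf (ZMod.unitOfCoprime k hke) = d)
    (hz : z = Nat.gcd (k - 1) e) (hg : g = e / z) :
    (∃ φ : (ZMod e)ˣ →* MulAut (Multiplicative (ZMod g)),
      Nonempty (MulAut (GGrp d e k) ≃* (Multiplicative (ZMod g)) ⋊[φ] (ZMod e)ˣ)) ∧
    Nat.card (MulAut (GGrp d e k)) = g * Nat.totient e := by
  have : NeZero e := ⟨right_ne_zero_of_mul (hde ▸ hn.ne_zero)⟩
  have : NeZero d := ⟨hord ▸ (orderOf_pos _).ne'⟩
  have hzg : z * g = e := by rw [hg, hz]; exact Nat.mul_div_cancel' (Nat.gcd_dvd_right _ _)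
  have : NeZero g := ⟨right_ne_zero_of_mul (hzg ▸ NeZero.ne e)⟩
  have hu : ZMod.unitOfCoprime k hke ^ d = 1 := hord ▸ pow_orderOf_eq_one _
  have hS : ∀ a, e ∣ a * ∑ i ∈ range d, k ^ i ↔ z ∣ a := fun a => hz ▸
    Nat.dvd_mul_iff_gcd_dvd (dvd_sub_one_mul_geomSum (by simpa using congrArg Units.val hu))
      (coprime_geomSum_gcd_sub_one hke hcop)
  let E := MulEquiv.ofBijective (GGrp.autHom (d := d) (k := k) hzg hS)
    ⟨GGrp.autHom_injective hzg hS hu, GGrp.autHom_surjective hzg hS hord hcop⟩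
  refine ⟨⟨_, ⟨E.symm⟩⟩, ?_⟩
  rw [← Nat.card_congr E.toEquiv, SemidirectProduct.card, Nat.card_congr Multiplicative.toAdd,
    Nat.card_zmod, Nat.card_eq_fintype_card, ZMod.card_units_eq_totient]
end

section
/- Let M = ⟨s, t | s^ε = t^δ = 1, tst⁻¹ = s^κ⟩ be a group of squarefree order n = δε, and set ζ = gcd(κ−1, ε) and γ = ε/ζ. Then with X = s^ζ and Y = t·s^γ, the group M has the presentation ⟨X, Y | X^γ = Y^{ζδ} = 1, YXY⁻¹ = X^κ⟩. -/
structure SatisfiesBraceRels {G : Type*} [Group G] (d e k : ℕ) (a b : G) : Prop where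
  pow_left : a ^ e = 1
  pow_right : b ^ d = 1
  conj : b * a * b⁻¹ = a ^ k

namespace GGrp

variable {d e k : ℕ} {G : Type*} [Group G] {a b : G}

theorem satisfiesBraceRels_of :
    SatisfiesBraceRels d e k (PresentedGroup.of 0 : GGrp d e k) (PresentedGroup.of 1) := by
  have rel {r} (hr : r ∈ braceRels d e k) := PresentedGroup.one_of_mem hr
  refine ⟨?_, ?_, ?_⟩
  · have := rel (Set.mem_insert _ _)
    rwa [map_pow] at this
  · have := rel (Set.mem_insert_of_mem _ (Set.mem_insert _ _))
    rwa [map_pow] at this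
  · have := rel (Set.mem_insert_of_mem _ (Set.mem_insert_of_mem _ rfl))
    rw [map_mul, map_mul, map_mul, map_inv, map_inv, map_pow] at this
    exact mul_inv_eq_one.mp this

def lift (h : SatisfiesBraceRels d e k a b) : GGrp d e k →* G :=
  PresentedGroup.toGroup (f := ![a, b]) <| by
    intro r hr
    simp only [braceRels, Set.mem_insert_iff, Set.mem_singleton_iff] at hr
    rcases hr with rfl | rfl | rfl
    · simpa using h.pow_left
    · simpa using h.pow_right
    · simpa [mul_inv_eq_one] using h.conj

@[simp]
theorem lift_of_zero (h : SatisfiesBraceRels d e k a b) : lift h (PresentedGroup.of 0) = a :=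
  PresentedGroup.toGroup.of _

@[simp]
theorem lift_of_one (h : SatisfiesBraceRels d e k a b) : lift h (PresentedGroup.of 1) = b :=
  PresentedGroup.toGroup.of _

theorem lift_comp_lift_eq_id {d' e' k' : ℕ} {a b : GGrp d e k}
    {hab : SatisfiesBraceRels d' e' k' a b} {a' b' : GGrp d' e' k'}
    {hab' : SatisfiesBraceRels d e k a' b'} (h0 : lift hab' a = PresentedGroup.of 0)
    (h1 : lift hab' b = PresentedGroup.of 1) : (lift hab').comp (lift hab) = MonoidHom.id _ :=
  PresentedGroup.ext (Fin.forall_fin_two.2 ⟨by simpa using h0, by simpa using h1⟩)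

end GGrp

section Group

variable {G : Type*} [Group G] {a b : G}

theorem zpow_eq_one_of_dvd {n : ℕ} {m : ℤ} (ha : a ^ n = 1) (hm : (n : ℤ) ∣ m) : a ^ m = 1 := by
  obtain ⟨c, rfl⟩ := hm
  rw [zpow_mul, zpow_natCast, ha, one_zpow]

theorem zpow_eq_zpow_of_modEq {n : ℕ} {m m' : ℤ} (ha : a ^ n = 1) (h : m ≡ m' [ZMOD n]) :
    a ^ m = a ^ m' := by
  rw [zpow_eq_zpow_emod' m ha, zpow_eq_zpow_emod' m' ha, h]

theorem conj_pow_eq_pow_pow {k : ℕ} (h : b * a * b⁻¹ = a ^ k) (j : ℕ) :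
    b ^ j * a * (b ^ j)⁻¹ = a ^ k ^ j := by
  induction j with
  | zero => simp
  | succ j ih =>
    calc b ^ (j + 1) * a * (b ^ (j + 1))⁻¹ = b * (b ^ j * a * (b ^ j)⁻¹) * b⁻¹ := by group
      _ = (b * a * b⁻¹) ^ k ^ j := by rw [ih, conj_pow]
      _ = a ^ k ^ (j + 1) := by rw [h, ← pow_mul, pow_succ']

theorem commute_pow_of_conj_eq_pow {k m j : ℕ} (h : b * a * b⁻¹ = a ^ k) (ha : a ^ m = 1)
    (hk : k ^ j ≡ 1 [MOD m]) : Commute a (b ^ j) := by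
  have hfix : a ^ k ^ j = a := by
    simpa using pow_eq_pow_iff_modEq.2 (hk.of_dvd (orderOf_dvd_of_pow_eq_one ha))
  exact (mul_inv_eq_iff_eq_mul.1 ((conj_pow_eq_pow_pow h j).trans hfix)).symm

end Group

namespace SatisfiesBraceRels

variable {G : Type*} [Group G] {δ ζ γ κ : ℕ} {A B : ℤ}

section OldGenerators

variable {s t : G}

theorem commute_left_pow_right (h : SatisfiesBraceRels δ (ζ * γ) κ s t) (hκ : κ ≡ 1 [MOD ζ]) :
    Commute (s ^ γ) t := by
  have hconj : t * s ^ γ * t⁻¹ = (s ^ γ) ^ κ := by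
    rw [← conj_pow, h.conj, ← pow_mul, ← pow_mul, mul_comm]
  have hs : (s ^ γ) ^ ζ = 1 := by rw [← pow_mul, mul_comm, h.pow_left]
  simpa using commute_pow_of_conj_eq_pow hconj hs (j := 1) (by simpa using hκ)

theorem mul_pow_eq (h : SatisfiesBraceRels δ (ζ * γ) κ s t) (hκ : κ ≡ 1 [MOD ζ]) :
    (t * s ^ γ) ^ δ = s ^ (γ * δ) := by
  rw [(h.commute_left_pow_right hκ).symm.mul_pow, h.pow_right, one_mul, ← pow_mul]

theorem pow_mul_pow (h : SatisfiesBraceRels δ (ζ * γ) κ s t) (hκ : κ ≡ 1 [MOD ζ]) :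
    SatisfiesBraceRels (ζ * δ) γ κ (s ^ ζ) (t * s ^ γ) where
  pow_left := by rw [← pow_mul, h.pow_left]
  pow_right := by
    rw [mul_comm ζ δ, pow_mul, h.mul_pow_eq hκ, ← pow_mul,
      show γ * δ * ζ = ζ * γ * δ by ring, pow_mul, h.pow_left, one_pow]
  conj :=
    calc t * s ^ γ * s ^ ζ * (t * s ^ γ)⁻¹ = t * s ^ ζ * t⁻¹ := by group
      _ = (s ^ ζ) ^ κ := by rw [← conj_pow, h.conj, ← pow_mul, ← pow_mul, mul_comm]

theorem pow_zpow_mul_zpow_eq (h : SatisfiesBraceRels δ (ζ * γ) κ s t) (hκ : κ ≡ 1 [MOD ζ])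
    (hAB : A * ζ + B * (γ * δ) = 1) : (s ^ ζ) ^ A * ((t * s ^ γ) ^ δ) ^ B = s := by
  rw [h.mul_pow_eq hκ, ← zpow_natCast, ← zpow_natCast, ← zpow_mul, ← zpow_mul, ← zpow_add]
  rw [show (ζ : ℤ) * A + ((γ * δ : ℕ) : ℤ) * B = 1 by push_cast; linear_combination hAB,
    zpow_one]

theorem mul_pow_mul_zpow_eq (h : SatisfiesBraceRels δ (ζ * γ) κ s t) (hκ : κ ≡ 1 [MOD ζ])
    (hAB : A * ζ + B * (γ * δ) = 1) : t * s ^ γ * ((t * s ^ γ) ^ δ) ^ (-(B * γ)) = t := by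
  have hs : s ^ γ * (s ^ (γ * δ)) ^ (-(B * γ)) = 1 := by
    rw [← zpow_natCast, ← zpow_natCast, ← zpow_mul, ← zpow_add]
    exact zpow_eq_one_of_dvd h.pow_left ⟨A, by push_cast; linear_combination (-(γ : ℤ)) * hAB⟩
  rw [h.mul_pow_eq hκ, mul_assoc, hs, mul_one]

end OldGenerators

section NewGenerators

variable {x y : G}

theorem commute_left_right_pow (h : SatisfiesBraceRels (ζ * δ) γ κ x y)
    (hκγ : κ ^ δ ≡ 1 [MOD γ]) : Commute x (y ^ δ) :=
  commute_pow_of_conj_eq_pow h.conj h.pow_left hκγ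

theorem zpow_mul_zpow (h : SatisfiesBraceRels (ζ * δ) γ κ x y) (hκζ : κ ≡ 1 [MOD ζ])
    (hκγ : κ ^ δ ≡ 1 [MOD γ]) (hAB : A * ζ + B * (γ * δ) = 1) :
    SatisfiesBraceRels δ (ζ * γ) κ (x ^ A * (y ^ δ) ^ B) (y * (y ^ δ) ^ (-(B * γ))) := by
  have hxz := h.commute_left_right_pow hκγ
  have hyz : Commute y (y ^ δ) := Commute.self_pow y δ
  have hz : (y ^ δ) ^ ζ = 1 := by rw [← pow_mul, mul_comm, h.pow_right]
  refine ⟨?_, ?_, ?_⟩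
  · rw [(hxz.zpow_zpow A B).mul_pow, ← zpow_natCast, ← zpow_natCast, ← zpow_mul, ← zpow_mul,
      zpow_eq_one_of_dvd h.pow_left ⟨A * ζ, by push_cast; ring⟩,
      zpow_eq_one_of_dvd hz ⟨B * γ, by push_cast; ring⟩, one_mul]
  · rw [(hyz.zpow_right _).mul_pow, ← zpow_natCast (_ ^ _), ← zpow_mul, ← zpow_one_add]
    exact zpow_eq_one_of_dvd hz ⟨A, by linear_combination -hAB⟩
  · have hwS : Commute ((y ^ δ) ^ (-(B * γ))) (x ^ A * (y ^ δ) ^ B) :=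
      (hxz.zpow_zpow A _).symm.mul_right (Commute.zpow_zpow_self _ _ _)
    have hzκ : ((y ^ δ) ^ B) ^ κ = (y ^ δ) ^ B := by
      rw [← zpow_natCast, ← zpow_mul]
      exact zpow_eq_zpow_of_modEq hz (by simpa using (Int.natCast_modEq_iff.2 hκζ).mul_left B)
    calc y * (y ^ δ) ^ (-(B * γ)) * (x ^ A * (y ^ δ) ^ B) * (y * (y ^ δ) ^ (-(B * γ)))⁻¹
        = y * ((y ^ δ) ^ (-(B * γ)) * (x ^ A * (y ^ δ) ^ B) * ((y ^ δ) ^ (-(B * γ)))⁻¹) * y⁻¹ := by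
          group
      _ = (y * x * y⁻¹) ^ A * (y * y ^ δ * y⁻¹) ^ B := by
          simp only [hwS.mul_inv_cancel, ← MulAut.conj_apply, map_mul, map_zpow]
      _ = (x ^ A * (y ^ δ) ^ B) ^ κ := by
          rw [h.conj, hyz.mul_inv_cancel, (hxz.zpow_zpow A B).mul_pow, hzκ, ← zpow_natCast,
            ← zpow_natCast (x ^ A), ← zpow_mul, ← zpow_mul, mul_comm]

theorem zpow_mul_zpow_pow_eq (h : SatisfiesBraceRels (ζ * δ) γ κ x y) (hκγ : κ ^ δ ≡ 1 [MOD γ])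
    (hAB : A * ζ + B * (γ * δ) = 1) : (x ^ A * (y ^ δ) ^ B) ^ ζ = x := by
  have hz : (y ^ δ) ^ ζ = 1 := by rw [← pow_mul, mul_comm, h.pow_right]
  rw [((h.commute_left_right_pow hκγ).zpow_zpow A B).mul_pow,
    ← zpow_natCast (x ^ A), ← zpow_natCast ((y ^ δ) ^ B), ← zpow_mul, ← zpow_mul,
    zpow_eq_one_of_dvd hz ⟨B, by ring⟩, mul_one]
  conv_rhs => rw [← zpow_one x]
  exact zpow_eq_zpow_of_modEq h.pow_left (Int.modEq_iff_dvd.2 ⟨B * δ, by linear_combination -hAB⟩)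

theorem mul_zpow_mul_pow_eq (h : SatisfiesBraceRels (ζ * δ) γ κ x y) (hκγ : κ ^ δ ≡ 1 [MOD γ]) :
    y * (y ^ δ) ^ (-(B * γ)) * (x ^ A * (y ^ δ) ^ B) ^ γ = y := by
  rw [((h.commute_left_right_pow hκγ).zpow_zpow A B).mul_pow,
    ← zpow_natCast (x ^ A), ← zpow_mul, zpow_eq_one_of_dvd h.pow_left ⟨A, by ring⟩, one_mul,
    ← zpow_natCast ((y ^ δ) ^ B), ← zpow_mul, mul_assoc, ← zpow_add, neg_add_cancel, zpow_zero,
    mul_one]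

end NewGenerators

end SatisfiesBraceRels

theorem Nat.modEq_one_of_dvd_sub_one {m k : ℕ} (hk : k.Coprime m) (h : m ∣ k - 1) :
    k ≡ 1 [MOD m] := by
  -- `k - 1` truncates to `0` at `k = 0`; coprimality then forces `m = 1`.
  rcases Nat.eq_zero_or_pos k with rfl | hpos
  · rw [(Nat.coprime_zero_left m).1 hk]
    exact Nat.modEq_one
  · exact ((Nat.modEq_iff_dvd' hpos).2 h).symm

theorem Nat.pow_modEq_one_of_unitOfCoprime_pow_eq_one {m k d : ℕ} (hk : k.Coprime m)
    (h : ZMod.unitOfCoprime k hk ^ d = 1) : k ^ d ≡ 1 [MOD m] := by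
  rw [← ZMod.natCast_eq_natCast_iff]
  simpa using congrArg Units.val h

/-- Let `M = G(δ,ε,κ) = ⟨s, t | s^ε = t^δ = 1, tst⁻¹ = s^κ⟩` have squarefree order
`n = δε`, and set `ζ = gcd(κ-1,ε)`, `γ = ε/ζ`. Then with `X = s^ζ` and `Y = t·s^γ`,
`M` has the presentation `⟨X, Y | X^γ = Y^{ζδ} = 1, YXY⁻¹ = X^κ⟩`; i.e. there is an
isomorphism from the latter presented group to `M` sending the generators to
`s^ζ` and `t·s^γ` respectively. -/
theorem new_presentation (n δ ε κ : ℕ) (hn : Squarefree n) (hde : n = δ * ε)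
    (hcop : Nat.Coprime δ ε) (hke : Nat.Coprime κ ε)
    (hord : orderOf (ZMod.unitOfCoprime κ hke) = δ)
    (ζ γ : ℕ) (hζ : ζ = Nat.gcd (κ - 1) ε) (hγ : γ = ε / ζ) :
    ∃ f : GGrp (ζ * δ) γ κ ≃* GGrp δ ε κ,
      f (PresentedGroup.of 0) = (PresentedGroup.of 0 : GGrp δ ε κ) ^ ζ ∧
      f (PresentedGroup.of 1) =
        (PresentedGroup.of 1 : GGrp δ ε κ) * (PresentedGroup.of 0 : GGrp δ ε κ) ^ γ := by
  have hζε : ζ ∣ ε := hζ ▸ Nat.gcd_dvd_right _ _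
  have hε : ε = ζ * γ := by rw [hγ, Nat.mul_div_cancel' hζε]
  have hκζ : κ ≡ 1 [MOD ζ] :=
    Nat.modEq_one_of_dvd_sub_one (hke.coprime_dvd_right hζε) (hζ ▸ Nat.gcd_dvd_left _ _)
  have hκγ : κ ^ δ ≡ 1 [MOD γ] :=
    (Nat.pow_modEq_one_of_unitOfCoprime_pow_eq_one hke (hord ▸ pow_orderOf_eq_one _)).of_dvd
      (Dvd.intro_left ζ hε.symm)
  have hζγ : ζ.Coprime γ :=
    Nat.coprime_of_squarefree_mul (hε ▸ hn.squarefree_of_dvd (hde ▸ dvd_mul_left ε δ))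
  obtain ⟨A, B, hAB⟩ :=
    Nat.isCoprime_iff_coprime.2 (hζγ.mul_right (hcop.symm.coprime_dvd_left hζε))
  push_cast at hAB
  subst hε
  have hold := GGrp.satisfiesBraceRels_of (d := δ) (e := ζ * γ) (k := κ)
  have hnew := GGrp.satisfiesBraceRels_of (d := ζ * δ) (e := γ) (k := κ)
  refine ⟨MonoidHom.toMulEquiv (GGrp.lift (hold.pow_mul_pow hκζ))
    (GGrp.lift (hnew.zpow_mul_zpow hκζ hκγ hAB)) (GGrp.lift_comp_lift_eq_id ?_ ?_)
    (GGrp.lift_comp_lift_eq_id ?_ ?_), by simp, by simp⟩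
  · simpa using hnew.zpow_mul_zpow_pow_eq hκγ hAB
  · simpa using hnew.mul_zpow_mul_pow_eq hκγ
  · simpa using hold.pow_zpow_mul_zpow_eq hκζ hAB
  · simpa using hold.mul_pow_mul_zpow_eq hκζ hAB
end
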